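/- Let (q_k)_{k≥0} be nonnegative reals with q_0 > 0. For every f ∈ L¹(G_m) and every n ∈ ℕ, t_{M_n} f = D_{M_n} ∗ f − (1/Q_{M_n}) Σ_{j=0}^{M_n−2} (q_j − q_{j+1}) · j · ((ψ_{M_n−1} · conj(K_j)) ∗ f) − (q_{M_n−1}/Q_{M_n}) · M_n · ((ψ_{M_n−1} · conj(K_{M_n})) ∗ f) + (q_{M_n−1}/Q_{M_n}) · ((ψ_{M_n−1} · conj(D_{M_n})) ∗ f), where conj denotes complex conjugation. -/

import Mathlib

open MeasureTheory Filter Finset Asymptotics ENNReal NNReal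

noncomputable section

namespace VilenkinPaper

/-- The Vilenkin group `G_m = ∏_k ℤ_{m_k}`. -/
abbrev G (m : ℕ → ℕ) : Type := ∀ k, ZMod (m k)

/-- The generalized powers `M_0 = 1`, `M_{k+1} = m_k M_k`. -/
def M (m : ℕ → ℕ) : ℕ → ℕ
  | 0 => 1
  | k + 1 => m k * M m k

/-- The basic neighborhoods `I_n = {y : y_0 = ⋯ = y_{n-1} = 0}`. -/
def I (m : ℕ → ℕ) (n : ℕ) : Set (G m) := {y | ∀ k < n, y k = 0}

/-- The generalized Rademacher functions `r_k(x) = exp(2πi x_k / m_k)`. -/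
def rad (m : ℕ → ℕ) (k : ℕ) (x : G m) : ℂ :=
  Complex.exp (2 * Real.pi * Complex.I * ((x k).val : ℂ) / (m k : ℂ))

/-- The `j`-th digit of `n` in the base determined by `m`. -/
def digit (m : ℕ → ℕ) (n j : ℕ) : ℕ := (n / M m j) % m j

/-- The Vilenkin functions `ψ_n = ∏_k r_k^{n_k}`. -/
def psi (m : ℕ → ℕ) (n : ℕ) (x : G m) : ℂ :=
  ∏ᶠ k, rad m k x ^ digit m n k

/-- Vilenkin-Fourier coefficient `f̂(k) = ∫ f ψ̄_k dμ`. -/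
def fourierCoeff (m : ℕ → ℕ) (μ : Measure (G m)) (f : G m → ℂ) (k : ℕ) : ℂ :=
  ∫ x, f x * (starRingEnd ℂ) (psi m k x) ∂μ

/-- Partial sums `S_n f = ∑_{k=0}^{n-1} f̂(k) ψ_k`. -/
def S (m : ℕ → ℕ) (μ : Measure (G m)) (n : ℕ) (f : G m → ℂ) (x : G m) : ℂ :=
  ∑ k ∈ Finset.range n, fourierCoeff m μ f k * psi m k x

/-- Fejér means `σ_n f = (1/n) ∑_{k=1}^n S_k f`. -/
def sigma (m : ℕ → ℕ) (μ : Measure (G m)) (n : ℕ) (f : G m → ℂ) (x : G m) : ℂ :=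
  (n : ℂ)⁻¹ * ∑ k ∈ Finset.Icc 1 n, S m μ k f x

/-- Dirichlet kernels `D_n = ∑_{k=0}^{n-1} ψ_k`. -/
def D (m : ℕ → ℕ) (n : ℕ) (x : G m) : ℂ := ∑ k ∈ Finset.range n, psi m k x

/-- Fejér kernels `K_n = (1/n) ∑_{k=1}^n D_k`. -/
def K (m : ℕ → ℕ) (n : ℕ) (x : G m) : ℂ := (n : ℂ)⁻¹ * ∑ k ∈ Finset.Icc 1 n, D m k x

/-- Convolution `(g ∗ f)(x) = ∫ f(t) g(x - t) dμ(t)`. -/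
def conv (m : ℕ → ℕ) (μ : Measure (G m)) (g f : G m → ℂ) (x : G m) : ℂ :=
  ∫ t, f t * g (x - t) ∂μ

/-- `Q_n = ∑_{k=0}^{n-1} q_k`. -/
def Q (q : ℕ → ℝ) (n : ℕ) : ℝ := ∑ k ∈ Finset.range n, q k

/-- Nörlund means `t_n f = (1/Q_n) ∑_{k=1}^n q_{n-k} S_k f`. -/
def T (m : ℕ → ℕ) (μ : Measure (G m)) (q : ℕ → ℝ) (n : ℕ) (f : G m → ℂ) (x : G m) : ℂ :=
  ((Q q n : ℝ) : ℂ)⁻¹ * ∑ k ∈ Finset.Icc 1 n, ((q (n - k) : ℝ) : ℂ) * S m μ k f x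

/-- The modulus of continuity `ω_p(1/M_n, f) = sup_{t ∈ I_n} ‖f(·+t) - f‖_p`. -/
def omega (m : ℕ → ℕ) (μ : Measure (G m)) (p : ℝ≥0∞) (f : G m → ℂ) (n : ℕ) : ℝ :=
  ⨆ t ∈ I m n, (eLpNorm (fun x => f (x + t) - f x) p μ).toReal

/-! For `N = M_n` the digits of `N - 1 - i` are the complements `m_k - 1 - i_k` of those of
`i < N`, so `ψ_{N-1-i} = ψ_{N-1} · conj ψ_i` and hence `D_{N-j} = D_N - ψ_{N-1} · conj D_j`.
Substituting this into the Nörlund kernel `F_N = Q_N⁻¹ ∑_{k=1}^N q_{N-k} D_k` leaves the term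
`ψ_{N-1} · conj (∑_{j<N} q_j D_j)`, and Abel summation with `∑_{i≤j} D_i = j K_j` rewrites that
sum through Fejér kernels. Finally `t_N f = F_N ∗ f`, and as all kernels are continuous on the
compact group `G_m`, the convolution splits term by term. -/

theorem sub_one_sub_div_mod {a b u : ℕ} (hb : 0 < b) (hab : b ∣ a) (hu : u < a) :
    (a - 1 - u) / b = a / b - 1 - u / b ∧ (a - 1 - u) % b = b - 1 - u % b := by
  obtain ⟨c, rfl⟩ := hab
  obtain ⟨d, hd⟩ := Nat.exists_eq_add_of_lt (Nat.div_lt_of_lt_mul hu)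
  have hr := Nat.mod_lt u hb
  have hu' := Nat.mod_add_div u b
  rw [Nat.mul_div_cancel_left _ hb, Nat.div_mod_unique hb, hd,
    show u / b + d + 1 - 1 - u / b = d by omega, Nat.mul_add, Nat.mul_add]
  omega

section Digits

variable {m : ℕ → ℕ}

theorem M_pos (hm : ∀ k, 0 < m k) : ∀ k, 0 < M m k
  | 0 => Nat.one_pos
  | k + 1 => Nat.mul_pos (hm k) (M_pos hm k)

theorem M_dvd_M {k n : ℕ} (h : k ≤ n) : M m k ∣ M m n := by
  induction h with
  | refl => exact dvd_rfl
  | step _ ih => exact ih.mul_left _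

theorem lt_M (hm : ∀ k, 2 ≤ m k) : ∀ k, k < M m k
  | 0 => Nat.one_pos
  | k + 1 => by
    have := lt_M hm k
    have : 2 * M m k ≤ m k * M m k := Nat.mul_le_mul_right _ (hm k)
    rw [M]
    omega

theorem digit_eq_zero_of_lt {ℓ k : ℕ} (h : ℓ < M m k) : digit m ℓ k = 0 := by
  rw [digit, Nat.div_eq_of_lt h, Nat.zero_mod]

theorem digit_M_sub_one_sub (hm : ∀ k, 0 < m k) {n i k : ℕ} (hk : k < n) (hi : i < M m n) :
    digit m (M m n - 1 - i) k = m k - 1 - digit m i k := by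
  have hMk : 0 < M m k := M_pos hm k
  have hdvd : m k ∣ M m n / M m k := by
    obtain ⟨d, hd⟩ := M_dvd_M (m := m) hk
    rw [hd, M, mul_assoc, mul_left_comm, Nat.mul_div_cancel_left _ hMk]
    exact dvd_mul_right _ _
  rw [digit, digit, (sub_one_sub_div_mod hMk (M_dvd_M hk.le) hi).1,
    (sub_one_sub_div_mod (hm k) hdvd (Nat.div_lt_div_of_lt_of_dvd (M_dvd_M hk.le) hi)).2]

theorem digit_M_sub_one (hm : ∀ k, 0 < m k) {n k : ℕ} (hk : k < n) :
    digit m (M m n - 1) k = m k - 1 := by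
  simpa [digit_eq_zero_of_lt (M_pos hm k)] using digit_M_sub_one_sub hm hk (M_pos hm n)

end Digits

section Rademacher

variable {m : ℕ → ℕ} {k : ℕ} [NeZero (m k)]

theorem rad_eq_toCircle (x : G m) : rad m k x = ZMod.toCircle (x k) := by
  rw [ZMod.toCircle_apply]
  rfl

theorem rad_add (x y : G m) : rad m k (x + y) = rad m k x * rad m k y := by
  simp only [rad_eq_toCircle, Pi.add_apply, AddChar.map_add_eq_mul, Circle.coe_mul]

theorem rad_neg (x : G m) : rad m k (-x) = starRingEnd ℂ (rad m k x) := by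
  simp only [rad_eq_toCircle, Pi.neg_apply, AddChar.map_neg_eq_inv, Circle.coe_inv_eq_conj]

theorem conj_rad (x : G m) : starRingEnd ℂ (rad m k x) = (rad m k x)⁻¹ := by
  rw [rad_eq_toCircle, ← Circle.coe_inv_eq_conj, Circle.coe_inv]

theorem rad_ne_zero (x : G m) : rad m k x ≠ 0 := by
  rw [rad_eq_toCircle]
  exact Circle.coe_ne_zero _

end Rademacher

@[fun_prop]
theorem continuous_rad {m : ℕ → ℕ} (k : ℕ) : Continuous (rad m k) :=
  continuous_of_discreteTopology.comp (continuous_apply k)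
    (g := fun z : ZMod (m k) => Complex.exp (2 * Real.pi * Complex.I * (z.val : ℂ) / (m k : ℂ)))

section Vilenkin

variable {m : ℕ → ℕ}

theorem neZero_of_two_le (hm : ∀ k, 2 ≤ m k) (k : ℕ) : NeZero (m k) :=
  ⟨((hm k).trans_lt' two_pos).ne'⟩

theorem psi_eq_prod (hm : ∀ k, 2 ≤ m k) {ℓ B : ℕ} (h : ℓ < M m B) (x : G m) :
    psi m ℓ x = ∏ k ∈ Finset.range B, rad m k x ^ digit m ℓ k := by
  refine finprod_eq_prod_of_mulSupport_subset _ fun k hk => ?_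
  by_contra hkB
  have hMB : M m B ≤ M m k :=
    Nat.le_of_dvd (M_pos (fun k => (hm k).trans_lt' two_pos) k) (M_dvd_M (by simpa using hkB))
  exact hk (by simp only [digit_eq_zero_of_lt (h.trans_le hMB), pow_zero])

theorem psi_eq_prod_range (hm : ∀ k, 2 ≤ m k) (ℓ : ℕ) (x : G m) :
    psi m ℓ x = ∏ k ∈ Finset.range ℓ, rad m k x ^ digit m ℓ k :=
  psi_eq_prod hm (lt_M hm ℓ) x

theorem psi_add (hm : ∀ k, 2 ≤ m k) (ℓ : ℕ) (x y : G m) :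
    psi m ℓ (x + y) = psi m ℓ x * psi m ℓ y := by
  have := neZero_of_two_le hm
  simp only [psi_eq_prod_range hm, rad_add, mul_pow, Finset.prod_mul_distrib]

theorem psi_neg (hm : ∀ k, 2 ≤ m k) (ℓ : ℕ) (x : G m) :
    psi m ℓ (-x) = starRingEnd ℂ (psi m ℓ x) := by
  have := neZero_of_two_le hm
  simp only [psi_eq_prod_range hm, rad_neg, map_prod, map_pow]

theorem psi_sub (hm : ∀ k, 2 ≤ m k) (ℓ : ℕ) (x t : G m) :
    psi m ℓ (x - t) = psi m ℓ x * starRingEnd ℂ (psi m ℓ t) := by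
  rw [sub_eq_add_neg, psi_add hm, psi_neg hm]

theorem continuous_psi (hm : ∀ k, 2 ≤ m k) (ℓ : ℕ) : Continuous (psi m ℓ) := by
  simp only [funext (psi_eq_prod_range hm ℓ)]
  fun_prop

theorem psi_M_sub_one_sub (hm : ∀ k, 2 ≤ m k) {n i : ℕ} (hi : i < M m n) (y : G m) :
    psi m (M m n - 1 - i) y = psi m (M m n - 1) y * starRingEnd ℂ (psi m i y) := by
  have hm0 : ∀ k, 0 < m k := fun k => (hm k).trans_lt' two_pos
  have := neZero_of_two_le hm
  rw [psi_eq_prod hm (B := n) (by omega), psi_eq_prod hm (B := n) (by omega),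
    psi_eq_prod hm hi, map_prod, ← Finset.prod_mul_distrib]
  refine Finset.prod_congr rfl fun k hk => ?_
  have hk := Finset.mem_range.mp hk
  have hd : digit m i k ≤ m k - 1 := Nat.le_sub_one_of_lt (Nat.mod_lt _ (hm0 k))
  rw [digit_M_sub_one_sub hm0 hk hi, digit_M_sub_one hm0 hk, map_pow, conj_rad, inv_pow,
    pow_sub₀ _ (rad_ne_zero y) hd]

end Vilenkin

section Kernels

variable {m : ℕ → ℕ}

theorem D_M_sub (hm : ∀ k, 2 ≤ m k) {n j : ℕ} (hj : j ≤ M m n) (y : G m) :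
    D m (M m n - j) y = D m (M m n) y - psi m (M m n - 1) y * starRingEnd ℂ (D m j y) := by
  have htail : ∑ i ∈ Finset.range j, psi m (M m n - j + i) y
      = psi m (M m n - 1) y * starRingEnd ℂ (D m j y) := by
    rw [D, map_sum, Finset.mul_sum, ← Finset.sum_range_reflect]
    refine Finset.sum_congr rfl fun i hi => ?_
    have hi := Finset.mem_range.mp hi
    rw [← psi_M_sub_one_sub hm (by omega)]
    congr 1
    omega
  rw [← htail, D, D, eq_sub_iff_add_eq, ← Finset.sum_range_add, Nat.sub_add_cancel hj]

theorem sum_range_succ_D (j : ℕ) (y : G m) :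
    ∑ i ∈ Finset.range (j + 1), D m i y = j * K m j y := by
  rcases Nat.eq_zero_or_pos j with rfl | hj
  · simp [D]
  rw [K, ← mul_assoc, mul_inv_cancel₀ (by exact_mod_cast hj.ne'), one_mul,
    Finset.sum_range_succ', D, Finset.range_zero, Finset.sum_empty, add_zero, Finset.range_eq_Ico,
    Finset.sum_Ico_add' (fun i => D m i y), zero_add, Finset.Ico_add_one_right_eq_Icc]

theorem sum_range_mul_D (c : ℕ → ℂ) (N : ℕ) (y : G m) :
    ∑ j ∈ Finset.range N, c j * D m j y
      = ∑ j ∈ Finset.range (N - 1), (c j - c (j + 1)) * j * K m j y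
        + c (N - 1) * (N * K m N y - D m N y) := by
  have hsum : ∑ j ∈ Finset.range N, D m j y = N * K m N y - D m N y := by
    rw [← sum_range_succ_D, Finset.sum_range_succ, add_sub_cancel_right]
  have hparts := Finset.sum_range_by_parts c (fun j => D m j y) N
  simp only [smul_eq_mul, sum_range_succ_D, hsum] at hparts
  rw [hparts, sub_eq_add_neg, add_comm, ← Finset.sum_neg_distrib]
  congr 1
  exact Finset.sum_congr rfl fun i _ => by ring

theorem sum_Icc_mul_D_M (hm : ∀ k, 2 ≤ m k) (q : ℕ → ℝ) (n : ℕ) (y : G m) :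
    ∑ k ∈ Finset.Icc 1 (M m n), (q (M m n - k) : ℂ) * D m k y
      = (Q q (M m n) : ℂ) * D m (M m n) y
        - psi m (M m n - 1) y
          * starRingEnd ℂ (∑ j ∈ Finset.range (M m n), (q j : ℂ) * D m j y) := by
  have hreflect : ∑ k ∈ Finset.Icc 1 (M m n), (q (M m n - k) : ℂ) * D m k y
      = ∑ j ∈ Finset.range (M m n), (q j : ℂ) * D m (M m n - j) y := by
    refine Finset.sum_nbij' (fun k => M m n - k) (fun j => M m n - j) ?_ ?_ ?_ ?_ ?_ <;>
      intro k hk <;> simp only [Finset.mem_Icc, Finset.mem_range] at hk ⊢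
    all_goals first | omega | rw [Nat.sub_sub_self hk.2]
  rw [hreflect, Finset.sum_congr rfl fun j hj => by rw [D_M_sub hm (Finset.mem_range.mp hj).le],
    map_sum, Finset.mul_sum, Q, Complex.ofReal_sum, Finset.sum_mul, ← Finset.sum_sub_distrib]
  refine Finset.sum_congr rfl fun j _ => ?_
  rw [map_mul, Complex.conj_ofReal]
  ring

def norlundKernel (m : ℕ → ℕ) (q : ℕ → ℝ) (n : ℕ) (y : G m) : ℂ :=
  ((Q q n : ℝ) : ℂ)⁻¹ * ∑ k ∈ Finset.Icc 1 n, ((q (n - k) : ℝ) : ℂ) * D m k y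

theorem norlundKernel_M (hm : ∀ k, 2 ≤ m k) (q : ℕ → ℝ) {n : ℕ} (hQ : Q q (M m n) ≠ 0)
    (y : G m) :
    norlundKernel m q (M m n) y =
      D m (M m n) y
      - ((Q q (M m n) : ℝ) : ℂ)⁻¹ *
          ∑ j ∈ Finset.range (M m n - 1), ((q j - q (j + 1) : ℝ) : ℂ) * (j : ℂ) *
            (psi m (M m n - 1) y * starRingEnd ℂ (K m j y))
      - ((q (M m n - 1) / Q q (M m n) : ℝ) : ℂ) * ((M m n : ℕ) : ℂ) *
          (psi m (M m n - 1) y * starRingEnd ℂ (K m (M m n) y))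
      + ((q (M m n - 1) / Q q (M m n) : ℝ) : ℂ) *
          (psi m (M m n - 1) y * starRingEnd ℂ (D m (M m n) y)) := by
  have hpsi_sum : psi m (M m n - 1) y * ∑ j ∈ Finset.range (M m n - 1),
        ((q j : ℂ) - (q (j + 1) : ℂ)) * (j : ℂ) * starRingEnd ℂ (K m j y)
      = ∑ j ∈ Finset.range (M m n - 1), ((q j - q (j + 1) : ℝ) : ℂ) * (j : ℂ) *
          (psi m (M m n - 1) y * starRingEnd ℂ (K m j y)) := by
    rw [Finset.mul_sum]
    exact Finset.sum_congr rfl fun j _ => by push_cast; ring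
  have hQ' : ((Q q (M m n) : ℝ) : ℂ) ≠ 0 := by exact_mod_cast hQ
  rw [norlundKernel, sum_Icc_mul_D_M hm, sum_range_mul_D (fun j => (q j : ℂ))]
  simp only [map_add, map_sum, map_mul, map_sub, Complex.conj_ofReal, map_natCast]
  rw [mul_add, hpsi_sum, Complex.ofReal_div]
  generalize ∑ j ∈ Finset.range (M m n - 1), ((q j - q (j + 1) : ℝ) : ℂ) * (j : ℂ) *
    (psi m (M m n - 1) y * starRingEnd ℂ (K m j y)) = s
  field_simp
  ring

end Kernels

theorem Q_pos {q : ℕ → ℝ} (hq0 : 0 < q 0) (hqnn : ∀ k, 0 ≤ q k) {n : ℕ} (hn : 0 < n) :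
    0 < Q q n :=
  hq0.trans_le (Finset.single_le_sum (fun k _ => hqnn k) (Finset.mem_range.mpr hn))

section Convolution

variable {m : ℕ → ℕ} {μ : Measure (G m)} {f : G m → ℂ}

theorem continuous_D (hm : ∀ k, 2 ≤ m k) (n : ℕ) : Continuous (D m n) :=
  continuous_finsetSum _ fun k _ => continuous_psi hm k

theorem continuous_K (hm : ∀ k, 2 ≤ m k) (n : ℕ) : Continuous (K m n) :=
  continuous_const.mul (continuous_finsetSum _ fun k _ => continuous_D hm k)

theorem conv_const_mul (c : ℂ) (g : G m → ℂ) (x : G m) :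
    conv m μ (fun y => c * g y) f x = c * conv m μ g f x := by
  simp only [conv, mul_left_comm (f _)]
  exact integral_const_mul c _

variable [∀ k, NeZero (m k)]

-- `G m` is compact, so continuous kernels are bounded.
theorem integrable_mul_comp_sub (hf : Integrable f μ) {g : G m → ℂ} (hg : Continuous g)
    (x : G m) : Integrable (fun t => f t * g (x - t)) μ := by
  obtain ⟨C, hC⟩ := (isCompact_range hg).isBounded.exists_norm_le
  exact hf.mul_bdd (hg.comp (continuous_const.sub continuous_id)).aestronglyMeasurable
    (ae_of_all _ fun t => hC _ ⟨x - t, rfl⟩)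

theorem conv_add (hf : Integrable f μ) {g h : G m → ℂ} (hg : Continuous g) (hh : Continuous h)
    (x : G m) : conv m μ (fun y => g y + h y) f x = conv m μ g f x + conv m μ h f x := by
  simp only [conv, mul_add]
  exact integral_add (integrable_mul_comp_sub hf hg x) (integrable_mul_comp_sub hf hh x)

theorem conv_sub (hf : Integrable f μ) {g h : G m → ℂ} (hg : Continuous g) (hh : Continuous h)
    (x : G m) : conv m μ (fun y => g y - h y) f x = conv m μ g f x - conv m μ h f x := by
  simp only [conv, mul_sub]
  exact integral_sub (integrable_mul_comp_sub hf hg x) (integrable_mul_comp_sub hf hh x)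

theorem conv_finsetSum (hf : Integrable f μ) {ι : Type*} (s : Finset ι) {g : ι → G m → ℂ}
    (hg : ∀ i ∈ s, Continuous (g i)) (x : G m) :
    conv m μ (fun y => ∑ i ∈ s, g i y) f x = ∑ i ∈ s, conv m μ (g i) f x := by
  simp only [conv, Finset.mul_sum]
  exact integral_finsetSum s fun i hi => integrable_mul_comp_sub hf (hg i hi) x

end Convolution

section Means

variable {m : ℕ → ℕ} {μ : Measure (G m)} {f : G m → ℂ}

theorem S_eq_conv_D (hm : ∀ k, 2 ≤ m k) (hf : Integrable f μ) (k : ℕ) (x : G m) :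
    S m μ k f x = conv m μ (D m k) f x := by
  have := neZero_of_two_le hm
  rw [show D m k = fun y => ∑ i ∈ Finset.range k, psi m i y from rfl,
    conv_finsetSum hf _ fun i _ => continuous_psi hm i, S]
  refine Finset.sum_congr rfl fun i _ => ?_
  simp only [conv, fourierCoeff, psi_sub hm, ← integral_mul_const]
  exact integral_congr_ae (ae_of_all _ fun t => by ring)

theorem T_eq_conv_norlundKernel (hm : ∀ k, 2 ≤ m k) (hf : Integrable f μ) (q : ℕ → ℝ) (n : ℕ)
    (x : G m) : T m μ q n f x = conv m μ (norlundKernel m q n) f x := by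
  have := neZero_of_two_le hm
  rw [T, show norlundKernel m q n = fun y => _ * ∑ k ∈ Finset.Icc 1 n, _ from rfl,
    conv_const_mul, conv_finsetSum hf _ fun k _ => (continuous_D hm k).const_mul _]
  simp only [conv_const_mul, S_eq_conv_D hm hf]

end Means

theorem norlund_Mn_fejer_kernel_representation_general
    (m : ℕ → ℕ) (hm : ∀ k, 2 ≤ m k)
    (μ : Measure (G m))
    (q : ℕ → ℝ) (hq0 : 0 < q 0) (hqnn : ∀ k, 0 ≤ q k)
    (f : G m → ℂ) (hf : MemLp f 1 μ) (n : ℕ) :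
    ∀ x : G m, T m μ q (M m n) f x =
      conv m μ (D m (M m n)) f x
      - ((Q q (M m n) : ℝ) : ℂ)⁻¹ *
          ∑ j ∈ Finset.range (M m n - 1), ((q j - q (j + 1) : ℝ) : ℂ) * (j : ℂ) *
            conv m μ (fun t => psi m (M m n - 1) t * (starRingEnd ℂ) (K m j t)) f x
      - ((q (M m n - 1) / Q q (M m n) : ℝ) : ℂ) * ((M m n : ℕ) : ℂ) *
          conv m μ (fun t => psi m (M m n - 1) t * (starRingEnd ℂ) (K m (M m n) t)) f x
      + ((q (M m n - 1) / Q q (M m n) : ℝ) : ℂ) *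
          conv m μ (fun t => psi m (M m n - 1) t * (starRingEnd ℂ) (D m (M m n) t)) f x := by
  intro x
  have := neZero_of_two_le hm
  have hfi : Integrable f μ := memLp_one_iff_integrable.mp hf
  have hQ : Q q (M m n) ≠ 0 :=
    (Q_pos hq0 hqnn (M_pos (fun k => (hm k).trans_lt' two_pos) n)).ne'
  have hψ := continuous_psi hm (M m n - 1)
  have hD := continuous_D hm
  have hK := continuous_K hm
  rw [T_eq_conv_norlundKernel hm hfi, funext (norlundKernel_M hm q hQ),
    conv_add hfi (by fun_prop) (by fun_prop), conv_sub hfi (by fun_prop) (by fun_prop),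
    conv_sub hfi (by fun_prop) (by fun_prop), conv_const_mul, conv_const_mul, conv_const_mul,
    conv_finsetSum hfi _ fun j _ => by fun_prop]
  simp only [conv_const_mul]

/-- kernel representation of `t_(M_n) f` via Fejér kernels. -/
theorem norlund_Mn_fejer_kernel_representation
    (m : ℕ → ℕ) (hm : ∀ k, 2 ≤ m k)
    (R : ℝ) (hR : IsLUB (Set.range fun k => (m k : ℝ)) R)
    (μ : Measure (G m)) [IsProbabilityMeasure μ] [μ.IsAddHaarMeasure]
    (q : ℕ → ℝ) (hq0 : 0 < q 0) (hqnn : ∀ k, 0 ≤ q k)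
    (f : G m → ℂ) (hf : MemLp f 1 μ) (n : ℕ) :
    ∀ x : G m, T m μ q (M m n) f x =
      conv m μ (D m (M m n)) f x
      - ((Q q (M m n) : ℝ) : ℂ)⁻¹ *
          ∑ j ∈ Finset.range (M m n - 1), ((q j - q (j + 1) : ℝ) : ℂ) * (j : ℂ) *
            conv m μ (fun t => psi m (M m n - 1) t * (starRingEnd ℂ) (K m j t)) f x
      - ((q (M m n - 1) / Q q (M m n) : ℝ) : ℂ) * ((M m n : ℕ) : ℂ) *
          conv m μ (fun t => psi m (M m n - 1) t * (starRingEnd ℂ) (K m (M m n) t)) f x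
      + ((q (M m n - 1) / Q q (M m n) : ℝ) : ℂ) *
          conv m μ (fun t => psi m (M m n - 1) t * (starRingEnd ℂ) (D m (M m n) t)) f x :=
  norlund_Mn_fejer_kernel_representation_general m hm μ q hq0 hqnn f hf n

end VilenkinPaper
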